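/- Let Z₁, …, Zₙ be i.i.d. N(0, 1/n) random variables and Z_max = max{Z₁, …, Zₙ}. Then for every ε with 0 < ε < 1, there is a constant C (depending on ε) with E[exp(Z_max²)] ≤ 1 + C n^{-(1-ε)} for all n sufficiently large. -/

import Mathlib

/-!
If every `Z_i² ≤ δ` then `exp (Z_max²) ≤ exp δ`; otherwise `exp (Z_max²)` is at most the sum over
`i` of `exp (Z_i²) 1{Z_i² > δ}`. Each summand has expectation at most `√(n/2) exp ((2 - n/2) δ)`,
since on `{x² > δ}` the integrand `exp (x² - n x²/2)` is at most `exp (-(n/2 - 2) δ) exp (-x²)`.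
With `δ = n^(ε-1)` we have `n δ = n^ε`, so `n` times this tail is `O(n² exp (-n^ε/2)) = o(δ)`,
while `exp δ ≤ 1 + 2δ`.
-/

open MeasureTheory ProbabilityTheory Real Filter
open scoped NNReal Topology

noncomputable def expSqTail (δ : ℝ) : ℝ → ℝ := {x | δ < x ^ 2}.indicator fun x => exp (x ^ 2)

lemma expSqTail_of_lt {δ x : ℝ} (h : δ < x ^ 2) : expSqTail δ x = exp (x ^ 2) :=
  Set.indicator_of_mem (s := {x | δ < x ^ 2}) h _

lemma expSqTail_of_le {δ x : ℝ} (h : x ^ 2 ≤ δ) : expSqTail δ x = 0 :=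
  Set.indicator_of_notMem (s := {x | δ < x ^ 2}) h.not_gt _

lemma expSqTail_nonneg (δ x : ℝ) : 0 ≤ expSqTail δ x :=
  Set.indicator_nonneg (fun _ _ => (exp_pos _).le) x

lemma measurable_expSqTail (δ : ℝ) : Measurable (expSqTail δ) :=
  (by fun_prop : Measurable fun x : ℝ => exp (x ^ 2)).indicator
    (measurableSet_lt measurable_const (by fun_prop))

lemma exp_sq_le_exp_add_expSqTail (δ x : ℝ) : exp (x ^ 2) ≤ exp δ + expSqTail δ x := by
  rcases lt_or_ge δ (x ^ 2) with hx | hx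
  · rw [expSqTail_of_lt hx]
    linarith [exp_pos δ]
  · rw [expSqTail_of_le hx, add_zero]
    exact exp_le_exp.mpr hx

lemma exp_sq_ciSup_le {ι : Type*} [Fintype ι] [Nonempty ι] (f : ι → ℝ) (δ : ℝ) :
    exp ((⨆ i, f i) ^ 2) ≤ exp δ + ∑ i, expSqTail δ (f i) := by
  obtain ⟨j, hj⟩ : ∃ j, f j = ⨆ i, f i := exists_eq_ciSup_of_finite
  rw [← hj]
  calc exp (f j ^ 2) ≤ exp δ + expSqTail δ (f j) := exp_sq_le_exp_add_expSqTail δ (f j)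
    _ ≤ exp δ + ∑ i, expSqTail δ (f i) := by
      gcongr
      exact Finset.single_le_sum (fun i _ => expSqTail_nonneg δ (f i)) (Finset.mem_univ j)

lemma integral_exp_sq_ciSup_le {ι Ω : Type*} [Fintype ι] [Nonempty ι] [MeasurableSpace Ω]
    {P : Measure Ω} [IsProbabilityMeasure P] {μ : Measure ℝ} [IsProbabilityMeasure μ]
    {Z : ι → Ω → ℝ} (hZ : ∀ i, P.map (Z i) = μ) {δ : ℝ} (hδ : Integrable (expSqTail δ) μ) :
    ∫ ω, exp ((⨆ i, Z i ω) ^ 2) ∂P ≤ exp δ + Fintype.card ι * ∫ x, expSqTail δ x ∂μ := by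
  have hZm (i : ι) : AEMeasurable (Z i) P :=
    .of_map_ne_zero ((hZ i).symm ▸ IsProbabilityMeasure.ne_zero μ)
  have hg {ν : Measure ℝ} : AEStronglyMeasurable (expSqTail δ) ν :=
    (measurable_expSqTail δ).aestronglyMeasurable
  have hint (i : ι) : Integrable (fun ω => expSqTail δ (Z i ω)) P :=
    (integrable_map_measure hg (hZm i)).mp ((hZ i).symm ▸ hδ)
  have hexp (i : ι) : ∫ ω, expSqTail δ (Z i ω) ∂P = ∫ x, expSqTail δ x ∂μ := by
    rw [← hZ i, integral_map (hZm i) hg]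
  calc ∫ ω, exp ((⨆ i, Z i ω) ^ 2) ∂P
      ≤ ∫ ω, (exp δ + ∑ i, expSqTail δ (Z i ω)) ∂P :=
        integral_mono_of_nonneg (ae_of_all _ fun _ => (exp_pos _).le)
          ((integrable_const _).add (integrable_finsetSum _ fun i _ => hint i))
          (ae_of_all _ fun ω => exp_sq_ciSup_le (Z · ω) δ)
    _ = exp δ + Fintype.card ι * ∫ x, expSqTail δ x ∂μ := by
        rw [integral_add (integrable_const _) (integrable_finsetSum _ fun i _ => hint i),
          integral_finsetSum _ fun i _ => hint i]
        simp [hexp]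

lemma gaussianPDFReal_mul_expSqTail_le {v : ℝ≥0} (hv : 4 * (v : ℝ) ≤ 1) (δ x : ℝ) :
    gaussianPDFReal 0 v x * expSqTail δ x
      ≤ (√(2 * π * v))⁻¹ * exp ((2 - (2 * (v : ℝ))⁻¹) * δ) * exp (-x ^ 2) := by
  rcases eq_or_ne v 0 with rfl | hv0
  · simp
  rcases lt_or_ge δ (x ^ 2) with hx | hx
  · have hcoef : 2 - (2 * (v : ℝ))⁻¹ ≤ 0 := by
      rw [sub_nonpos, le_inv_comm₀ (by norm_num) (by positivity)]; linarith
    have hexp : exp (-(x - 0) ^ 2 / (2 * v)) * exp (x ^ 2)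
        = exp ((2 - (2 * (v : ℝ))⁻¹) * x ^ 2) * exp (-x ^ 2) := by
      rw [← exp_add, ← exp_add]; congr 1; field_simp; ring
    rw [expSqTail_of_lt hx, gaussianPDFReal, mul_assoc, hexp, ← mul_assoc]
    gcongr _ * exp ?_ * _
    exact mul_le_mul_of_nonpos_left hx.le hcoef
  · rw [expSqTail_of_le hx, mul_zero]
    positivity

lemma integrable_const_mul_exp_neg_sq (c : ℝ) : Integrable fun x : ℝ => c * exp (-x ^ 2) := by
  simpa using (integrable_exp_neg_mul_sq one_pos).const_mul c

lemma integrable_expSqTail_gaussianReal {v : ℝ≥0} (hv : 4 * (v : ℝ) ≤ 1) (δ : ℝ) :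
    Integrable (expSqTail δ) (gaussianReal 0 v) := by
  rcases eq_or_ne v 0 with rfl | hv0
  · simpa using integrable_dirac (a := (0 : ℝ)) (f := expSqTail δ) enorm_lt_top
  rw [gaussianReal_of_var_ne_zero 0 hv0, integrable_withDensity_iff_integrable_smul'
    (measurable_gaussianPDF 0 v) (ae_of_all _ fun _ => gaussianPDF_lt_top)]
  simp only [toReal_gaussianPDF, smul_eq_mul]
  exact (integrable_const_mul_exp_neg_sq _).mono'
    ((measurable_gaussianPDFReal 0 v).mul (measurable_expSqTail δ)).aestronglyMeasurable
    (ae_of_all _ fun x => (Real.norm_of_nonneg (mul_nonneg (gaussianPDFReal_nonneg 0 v x)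
      (expSqTail_nonneg δ x))).trans_le (gaussianPDFReal_mul_expSqTail_le hv δ x))

lemma integral_expSqTail_gaussianReal_le {v : ℝ≥0} (hv0 : v ≠ 0) (hv : 4 * (v : ℝ) ≤ 1)
    (δ : ℝ) :
    ∫ x, expSqTail δ x ∂gaussianReal 0 v ≤ (√(2 * v))⁻¹ * exp ((2 - (2 * (v : ℝ))⁻¹) * δ) := by
  have hgauss : ∫ x : ℝ, exp (-x ^ 2) = √π := by simpa using integral_gaussian 1
  rw [integral_gaussianReal_eq_integral_smul hv0]
  calc ∫ x, gaussianPDFReal 0 v x • expSqTail δ x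
      ≤ ∫ x, (√(2 * π * v))⁻¹ * exp ((2 - (2 * (v : ℝ))⁻¹) * δ) * exp (-x ^ 2) :=
        integral_mono_of_nonneg
          (ae_of_all _ fun x => mul_nonneg (gaussianPDFReal_nonneg 0 v x) (expSqTail_nonneg δ x))
          (integrable_const_mul_exp_neg_sq _)
          (ae_of_all _ fun x => gaussianPDFReal_mul_expSqTail_le hv δ x)
    _ = (√(2 * v))⁻¹ * exp ((2 - (2 * (v : ℝ))⁻¹) * δ) := by
        rw [integral_const_mul, hgauss, mul_right_comm 2 π, sqrt_mul (by positivity) π]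
        field_simp

lemma four_mul_coe_one_div_natCast_le_one {n : ℕ} (hn : 4 ≤ n) :
    4 * (((1 : ℝ≥0) / n : ℝ≥0) : ℝ) ≤ 1 := by
  rw [NNReal.coe_div, NNReal.coe_one, NNReal.coe_natCast, mul_one_div,
    div_le_one (by positivity)]
  exact_mod_cast hn

lemma integral_expSqTail_gaussianReal_one_div_le {n : ℕ} (hn : 4 ≤ n) (δ : ℝ) :
    ∫ x, expSqTail δ x ∂gaussianReal 0 ((1 : ℝ≥0) / n) ≤ √(n / 2) * exp ((2 - n / 2) * δ) := by
  have hv0 : (1 : ℝ≥0) / n ≠ 0 := by simp; omega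
  convert integral_expSqTail_gaussianReal_le hv0 (four_mul_coe_one_div_natCast_le_one hn) δ
    using 3 <;> simp [div_eq_mul_inv, sqrt_inv, mul_comm]

lemma tendsto_rpow_mul_exp_neg_rpow_div_two (a : ℝ) {ε : ℝ} (hε : 0 < ε) :
    Tendsto (fun x : ℝ => x ^ a * exp (-x ^ ε / 2)) atTop (𝓝 0) := by
  have h := (tendsto_rpow_mul_exp_neg_mul_atTop_nhds_zero (a / ε) (1 / 2) one_half_pos).comp
    (tendsto_rpow_atTop hε)
  refine h.congr' (eventually_gt_atTop 0 |>.mono fun x hx => ?_)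
  simp only [Function.comp_apply, ← rpow_mul hx.le, mul_div_cancel₀ a hε.ne']
  ring_nf

lemma eventually_natCast_mul_tail_le {ε : ℝ} (hε0 : 0 < ε) (hε1 : ε ≤ 1) :
    ∀ᶠ n : ℕ in atTop,
      n * (√(n / 2) * exp ((2 - n / 2) * (n : ℝ) ^ (ε - 1))) ≤ (n : ℝ) ^ (ε - 1) := by
  have hsmall := (tendsto_rpow_mul_exp_neg_rpow_div_two (3 - ε) hε0).comp
    tendsto_natCast_atTop_atTop |>.eventually (eventually_le_nhds (exp_pos (-2)))
  filter_upwards [hsmall, eventually_ge_atTop 1] with n hn hn1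
  have hn0 : (0 : ℝ) < n := by exact_mod_cast hn1
  have hδ : (n : ℝ) ^ (ε - 1) ≤ 1 :=
    rpow_le_one_of_one_le_of_nonpos (by exact_mod_cast hn1) (by linarith)
  have hnδ : (n : ℝ) * (n : ℝ) ^ (ε - 1) = (n : ℝ) ^ ε := by
    rw [← rpow_one_add' hn0.le (by linarith)]; ring_nf
  have hsqrt : √(n / 2) ≤ n := by
    rw [sqrt_le_left (by positivity)]; nlinarith [(by exact_mod_cast hn1 : (1 : ℝ) ≤ n)]
  calc (n : ℝ) * (√(n / 2) * exp ((2 - n / 2) * (n : ℝ) ^ (ε - 1)))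
      ≤ n * (n * exp (2 - (n : ℝ) ^ ε / 2)) := by
        gcongr
        rw [← hnδ]; nlinarith
    _ = (n : ℝ) ^ (ε - 1) * ((n : ℝ) ^ (3 - ε) * exp (-(n : ℝ) ^ ε / 2)) * exp 2 := by
        have hpow : (n : ℝ) ^ (ε - 1) * (n : ℝ) ^ (3 - ε) = n * n := by
          rw [← rpow_add hn0, show ε - 1 + (3 - ε) = 2 by ring, rpow_two, sq]
        rw [show 2 - (n : ℝ) ^ ε / 2 = -(n : ℝ) ^ ε / 2 + 2 by ring, exp_add]
        linear_combination (-(exp (-(n : ℝ) ^ ε / 2) * exp 2)) * hpow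
    _ ≤ (n : ℝ) ^ (ε - 1) * exp (-2) * exp 2 := by gcongr; exact hn
    _ = (n : ℝ) ^ (ε - 1) := by rw [mul_assoc, ← exp_add]; simp

theorem gaussian_max_exp_sq_expectation
    {Ω : Type*} [MeasurableSpace Ω] (P : Measure Ω) [IsProbabilityMeasure P]
    (ε : ℝ) (hε0 : 0 < ε) (hε1 : ε < 1) :
    ∃ C : ℝ, ∃ N : ℕ, ∀ n : ℕ, N ≤ n → ∀ Z : Fin n → Ω → ℝ,
      iIndepFun Z P →
      (∀ i, Measure.map (Z i) P = gaussianReal 0 ((1 : NNReal) / n)) →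
      (∫ ω, Real.exp ((⨆ i, Z i ω) ^ 2) ∂P) ≤ 1 + C * (n : ℝ) ^ (-(1 - ε)) := by
  obtain ⟨N, hN⟩ := ((eventually_natCast_mul_tail_le hε0 hε1.le).and
    (eventually_ge_atTop 4)).exists_forall_of_atTop
  refine ⟨3, N, fun n hn Z _ hZ => ?_⟩
  obtain ⟨htail, hn4⟩ := hN n hn
  have : Nonempty (Fin n) := ⟨⟨0, by omega⟩⟩
  set δ : ℝ := (n : ℝ) ^ (ε - 1)
  have hδ0 : 0 ≤ δ := by positivity
  have hδ1 : δ ≤ 1 := rpow_le_one_of_one_le_of_nonpos (by exact_mod_cast (by omega : 1 ≤ n))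
    (by linarith)
  have hexp : exp δ ≤ 1 + 2 * δ := by
    have := abs_exp_sub_one_le (x := δ) (by rwa [abs_of_nonneg hδ0])
    rw [abs_of_nonneg hδ0] at this
    linarith [le_abs_self (exp δ - 1)]
  calc ∫ ω, exp ((⨆ i, Z i ω) ^ 2) ∂P
      ≤ exp δ + n * ∫ x, expSqTail δ x ∂gaussianReal 0 ((1 : ℝ≥0) / n) := by
        simpa using integral_exp_sq_ciSup_le hZ
          (integrable_expSqTail_gaussianReal (four_mul_coe_one_div_natCast_le_one hn4) δ)
    _ ≤ (1 + 2 * δ) + n * (√(n / 2) * exp ((2 - n / 2) * δ)) := by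
        gcongr
        exact integral_expSqTail_gaussianReal_one_div_le hn4 δ
    _ ≤ 1 + 3 * (n : ℝ) ^ (-(1 - ε)) := by
        rw [neg_sub]
        linarith
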